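/- arXiv:2002.08807 — 4 statements merged into one kernel-verified Lean document; each statement's English description precedes it below -/
import Mathlib

section
/- Let q ≥ 1 be an integer, let T : ℝ^q → ℝ be measurable and periodic of period 1 in each variable, let α < β be reals, and let C be a positive integer. Suppose that for every 1 ≤ j ≤ q and every ϑ ∈ [0,1]^{q−1}, the set of t ∈ [0,1] for which T evaluated at the point with j-th coordinate t and remaining coordinates ϑ lies in (α, β) is a union of at most C intervals. Let ψ₀ be the indicator function on [0,1]^q of the set {θ : T(θ) ∈ (α, β)}. Then for every m ∈ ℤ^q with m ≠ 0 one has |c_m(ψ₀)| ≤ C / (π · max_j |m_j|), and moreover |c_m(ψ₀)| ≤ c_0(ψ₀), where c_0(ψ₀) is the Lebesgue measure of {θ ∈ [0,1]^q : T(θ) ∈ (α, β)}. -/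
open MeasureTheory Real

/-- The unit box `[0,1]^q` in `ℝ^q`. -/
def unitBox (q : ℕ) : Set (Fin q → ℝ) := Set.univ.pi fun _ => Set.Icc (0:ℝ) 1

/-- The `m`-th Fourier coefficient of a (1-periodic) function `u : ℝ^q → ℝ`:
`c_m(u) = ∫_{[0,1]^q} u(θ) e^{-2πi (m·θ)} dθ`. -/
noncomputable def fourierCoeffPi (q : ℕ) (u : (Fin q → ℝ) → ℝ) (m : Fin q → ℤ) : ℂ :=
  ∫ θ in unitBox q,
    (u θ : ℂ) * Complex.exp (-(2 * (Real.pi : ℂ) * Complex.I) * (∑ j, (m j : ℂ) * (θ j : ℂ)))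

/-!
Write the coefficient as `∫_S e(-m·θ) dθ` with `S = [0,1]^q ∩ T⁻¹(α,β)` and integrate first along a
coordinate `j` where `|m_j|` is maximal. Each line in direction `j` meets `S` in at most `C`
intervals, which may be taken disjoint after merging overlapping ones, and over a single interval
`|∫ e(-m_j t) dt| ≤ 2 / (2π|m_j|)`. The second bound is just `|e(-m·θ)| = 1`.
-/

open Set Complex
open scoped Finset

variable {E : Type*} [NormedAddCommGroup E] [NormedSpace ℝ E]

theorem Set.OrdConnected.ae_eq_Ioo_csInf_csSup {μ : Measure ℝ} [NullSingletonClass μ] {A : Set ℝ}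
    (hA : A.OrdConnected) (hbdd : Bornology.IsBounded A) :
    A =ᵐ[μ] Ioo (sInf A) (sSup A) := by
  rcases A.eq_empty_or_nonempty with rfl | hne
  · simp
  have hIoo : Ioo (sInf A) (sSup A) ⊆ A :=
    IsConnected.Ioo_csInf_csSup_subset ⟨hne, hA.isPreconnected⟩ hbdd.bddBelow hbdd.bddAbove
  have hIcc : A ⊆ Icc (sInf A) (sSup A) := subset_Icc_csInf_csSup hbdd.bddBelow hbdd.bddAbove
  have hends : A \ Ioo (sInf A) (sSup A) ⊆ {sInf A, sSup A} :=
    (sdiff_subset_sdiff_left hIcc).trans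
      (Icc_sdiff_Ioo_same (Real.sInf_le_sSup A hbdd.bddBelow hbdd.bddAbove)).le
  refine ae_eq_set.2 ⟨measure_mono_null hends ((toFinite _).measure_zero μ), ?_⟩
  simp [sdiff_eq_empty.2 hIoo]

theorem norm_intervalIntegral_exp_le (a b : ℝ) {ξ : ℝ} (hξ : ξ ≠ 0) :
    ‖∫ t in a..b, cexp (-(2 * π * I * ξ) * t)‖ ≤ 1 / (π * |ξ|) := by
  have hc : -(2 * π * I * ξ) ≠ 0 := by simp [hξ, pi_ne_zero]
  have hunit (x : ℝ) : ‖cexp (-(2 * π * I * ξ) * x)‖ = 1 := by simp [norm_exp]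
  have hnorm : ‖-(2 * π * I * ξ)‖ = 2 * π * |ξ| := by simp [abs_of_pos pi_pos]
  rw [integral_exp_mul_complex hc, norm_div, hnorm]
  calc _ ≤ (1 + 1) / (2 * π * |ξ|) := by
        gcongr
        exact (norm_sub_le _ _).trans (by rw [hunit, hunit])
    _ = 1 / (π * |ξ|) := by field_simp; ring

theorem norm_setIntegral_exp_le_of_ordConnected {A : Set ℝ} (hA : A.OrdConnected)
    (hbdd : Bornology.IsBounded A) {ξ : ℝ} (hξ : ξ ≠ 0) :
    ‖∫ t in A, cexp (-(2 * π * I * ξ) * t)‖ ≤ 1 / (π * |ξ|) := by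
  rw [setIntegral_congr_set (hA.ae_eq_Ioo_csInf_csSup hbdd), setIntegral_congr_set Ioo_ae_eq_Ioc,
    ← intervalIntegral.integral_of_le (Real.sInf_le_sSup A hbdd.bddBelow hbdd.bddAbove)]
  exact norm_intervalIntegral_exp_le _ _ hξ

theorem norm_setIntegral_sUnion_le_card_mul {μ : Measure ℝ} {f : ℝ → E} {K : Set ℝ} {B : ℝ}
    (hf : IntegrableOn f K μ) (hB : ∀ A ⊆ K, A.OrdConnected → ‖∫ t in A, f t ∂μ‖ ≤ B)
    (s : Finset (Set ℝ)) (hs : ∀ A ∈ s, A ⊆ K ∧ A.OrdConnected) :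
    ‖∫ t in ⋃₀ ↑s, f t ∂μ‖ ≤ #s * B := by
  have hB0 : 0 ≤ B := by simpa using hB ∅ (empty_subset K) ordConnected_empty
  induction hn : #s using Nat.strong_induction_on generalizing s with
  | _ n ih =>
  subst hn
  by_cases hdisj : (s : Set (Set ℝ)).PairwiseDisjoint id
  · rw [sUnion_eq_biUnion, Finset.set_biUnion_coe, integral_biUnion_finset s
      (fun A hA => (hs A hA).2.measurableSet) hdisj fun A hA => hf.mono_set (hs A hA).1]
    calc ‖∑ A ∈ s, ∫ t in A, f t ∂μ‖ ≤ ∑ A ∈ s, ‖∫ t in A, f t ∂μ‖ := norm_sum_le _ _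
      _ ≤ ∑ _A ∈ s, B := Finset.sum_le_sum fun A hA => hB A (hs A hA).1 (hs A hA).2
      _ = #s * B := by simp
  -- two of the sets meet: replace them by their union, which is again ord-connected
  obtain ⟨A, hA, A', hA', hne, hmeet⟩ : ∃ A ∈ s, ∃ A' ∈ s, A ≠ A' ∧ (A ∩ A').Nonempty := by
    simpa [Set.PairwiseDisjoint, Set.Pairwise, Set.not_disjoint_iff_nonempty_inter] using hdisj
  set s' := insert (A ∪ A') ((s.erase A).erase A')
  have hA'A : A' ∈ s.erase A := Finset.mem_erase.2 ⟨hne.symm, hA'⟩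
  have hcard : #s' < #s := by
    have h1 := Finset.card_erase_of_mem hA
    have h2 := Finset.card_erase_of_mem hA'A
    have h3 := Finset.card_pos.2 ⟨A', hA'A⟩
    have h4 : #s' ≤ _ := Finset.card_insert_le _ _
    omega
  have hunion : ⋃₀ (s' : Set (Set ℝ)) = ⋃₀ ↑s := by
    ext x
    simp only [s', Finset.coe_insert, Finset.coe_erase, sUnion_insert, Set.mem_union, mem_sUnion,
      Set.mem_sdiff, Finset.mem_coe, Set.mem_singleton_iff]
    grind
  have hs' : ∀ A'' ∈ s', A'' ⊆ K ∧ A''.OrdConnected := by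
    simp only [s', Finset.mem_insert, Finset.mem_erase]
    rintro A'' (rfl | ⟨-, -, hA''⟩)
    · exact ⟨union_subset (hs A hA).1 (hs A' hA').1, isPreconnected_iff_ordConnected.1
        ((hs A hA).2.isPreconnected.union' hmeet (hs A' hA').2.isPreconnected)⟩
    · exact hs A'' hA''
  calc ‖∫ t in ⋃₀ ↑s, f t ∂μ‖ = ‖∫ t in ⋃₀ ↑s', f t ∂μ‖ := by rw [hunion]
    _ ≤ #s' * B := ih _ hcard s' hs' rfl
    _ ≤ #s * B := by gcongr

theorem norm_setIntegral_exp_iUnion_le {ι : Type*} [Fintype ι] {J : ι → Set ℝ}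
    (hJ : ∀ i, (J i).OrdConnected) {a b : ℝ} (hab : ∀ i, J i ⊆ Icc a b) {ξ : ℝ} (hξ : ξ ≠ 0) :
    ‖∫ t in ⋃ i, J i, cexp (-(2 * π * I * ξ) * t)‖ ≤ Fintype.card ι / (π * |ξ|) := by
  have hf : IntegrableOn (fun t : ℝ => cexp (-(2 * π * I * ξ) * t)) (Icc a b) :=
    (by fun_prop : Continuous fun t : ℝ => cexp (-(2 * π * I * ξ) * t)).integrableOn_Icc
  have hs : ∀ A ∈ Finset.univ.image J, A ⊆ Icc a b ∧ A.OrdConnected := by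
    simp only [Finset.mem_image, Finset.mem_univ, true_and]
    rintro _ ⟨i, rfl⟩
    exact ⟨hab i, hJ i⟩
  have := norm_setIntegral_sUnion_le_card_mul hf
    (fun A hA hAc => norm_setIntegral_exp_le_of_ordConnected hAc
      (Metric.isBounded_Icc a b |>.subset hA) hξ) _ hs
  rw [Finset.coe_image, Finset.coe_univ, image_univ, sUnion_range] at this
  calc _ ≤ #(Finset.univ.image J) * (1 / (π * |ξ|)) := this
    _ ≤ Fintype.card ι * (1 / (π * |ξ|)) := by
        gcongr
        exact Finset.card_image_le
    _ = Fintype.card ι / (π * |ξ|) := by ring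

theorem measurableSet_unitBox (q : ℕ) : MeasurableSet (unitBox q) :=
  MeasurableSet.univ_pi fun _ => measurableSet_Icc

theorem isCompact_unitBox (q : ℕ) : IsCompact (unitBox q) :=
  isCompact_univ_pi fun _ => isCompact_Icc

theorem volume_unitBox (q : ℕ) : volume (unitBox q) = 1 := by
  rw [unitBox, volume_pi_pi]
  simp [Real.volume_Icc]

theorem update_mem_unitBox_iff {q : ℕ} {θ : Fin q → ℝ} (hθ : θ ∈ unitBox q) (j : Fin q)
    (t : ℝ) : Function.update θ j t ∈ unitBox q ↔ t ∈ Icc 0 1 := by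
  rw [unitBox, update_mem_pi_iff_of_mem hθ]
  simp

theorem insertNth_mem_unitBox_iff {n : ℕ} (j : Fin (n + 1)) (t : ℝ) (ϑ : Fin n → ℝ) :
    j.insertNth t ϑ ∈ unitBox (n + 1) ↔ t ∈ Icc 0 1 ∧ ϑ ∈ unitBox n := by
  rw [unitBox, unitBox, mem_univ_pi, mem_univ_pi, Fin.forall_iff_succAbove j]
  simp

theorem norm_integral_le_of_norm_integral_update_le {n : ℕ} (j : Fin (n + 1))
    {g : (Fin (n + 1) → ℝ) → E} (hg : Integrable g) (hsupp : ∀ θ ∉ unitBox (n + 1), g θ = 0)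
    {B : ℝ} (hB : ∀ θ ∈ unitBox (n + 1), ‖∫ t, g (Function.update θ j t)‖ ≤ B) :
    ‖∫ θ, g θ‖ ≤ B := by
  have hmp := (volume_preserving_piFinSuccAbove (fun _ : Fin (n + 1) => ℝ) j).symm
  have hfubini : ∫ θ, g θ = ∫ ϑ : Fin n → ℝ, ∫ t, g (j.insertNth t ϑ) := by
    rw [← hmp.integral_comp (MeasurableEquiv.measurableEmbedding _), Measure.volume_eq_prod,
      integral_prod_symm]
    · rfl
    · rw [← Measure.volume_eq_prod]
      exact (hmp.integrable_comp_emb (MeasurableEquiv.measurableEmbedding _)).2 hg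
  have hzero : ∀ ϑ ∉ unitBox n, ∫ t, g (j.insertNth t ϑ) = 0 := fun ϑ hϑ => by
    have hline (t : ℝ) : g (j.insertNth t ϑ) = 0 :=
      hsupp _ fun h => hϑ ((insertNth_mem_unitBox_iff j t ϑ).1 h).2
    simp [hline]
  have hslice : ∀ ϑ ∈ unitBox n, ‖∫ t, g (j.insertNth t ϑ)‖ ≤ B := fun ϑ hϑ => by
    simpa using hB (j.insertNth 0 ϑ) ((insertNth_mem_unitBox_iff j 0 ϑ).2 ⟨by simp, hϑ⟩)
  rw [hfubini, ← setIntegral_eq_integral_of_forall_compl_eq_zero hzero]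
  simpa [measureReal_def, volume_unitBox] using
    norm_setIntegral_le_of_norm_le_const (isCompact_unitBox n).measure_lt_top (μ := volume) hslice

noncomputable def fourierPhase {q : ℕ} (m : Fin q → ℤ) (θ : Fin q → ℝ) : ℂ :=
  cexp (-(2 * π * I) * ∑ j, (m j : ℂ) * (θ j : ℂ))

theorem continuous_fourierPhase {q : ℕ} (m : Fin q → ℤ) : Continuous (fourierPhase m) := by
  unfold fourierPhase
  fun_prop

theorem norm_fourierPhase {q : ℕ} (m : Fin q → ℤ) (θ : Fin q → ℝ) : ‖fourierPhase m θ‖ = 1 := by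
  simp [fourierPhase, norm_exp, Complex.mul_re, Complex.re_sum]

theorem fourierPhase_update {q : ℕ} (m : Fin q → ℤ) (θ : Fin q → ℝ) (j : Fin q) (t : ℝ) :
    fourierPhase m (Function.update θ j t) =
      cexp (-(2 * π * I * (m j : ℝ)) * t) * fourierPhase m (Function.update θ j 0) := by
  classical
  have hrest : ∑ k ∈ {j}ᶜ, (m k : ℂ) * (Function.update θ j t k : ℂ) =
      ∑ k ∈ {j}ᶜ, (m k : ℂ) * (Function.update θ j 0 k : ℂ) :=
    Finset.sum_congr rfl fun k hk => by
      rw [Function.update_of_ne (by simpa using hk), Function.update_of_ne (by simpa using hk)]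
  rw [fourierPhase, fourierPhase, ← Complex.exp_add, Fintype.sum_eq_add_sum_compl j,
    Fintype.sum_eq_add_sum_compl j (fun k => (m k : ℂ) * (Function.update θ j 0 k : ℂ)), hrest]
  simp only [Function.update_self]
  push_cast
  ring_nf

theorem fourierCoeffPi_indicator_one {q : ℕ} {S : Set (Fin q → ℝ)} (hS : MeasurableSet S)
    (hSbox : S ⊆ unitBox q) (m : Fin q → ℤ) :
    fourierCoeffPi q (S.indicator fun _ => 1) m = ∫ θ in S, fourierPhase m θ := by
  have hpoint : ∀ θ, ((S.indicator (fun _ => (1 : ℝ)) θ : ℝ) : ℂ) *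
      cexp (-(2 * (π : ℂ) * I) * ∑ j, (m j : ℂ) * (θ j : ℂ)) = S.indicator (fourierPhase m) θ := by
    intro θ
    by_cases hθ : θ ∈ S <;> simp [hθ, fourierPhase]
  simp only [fourierCoeffPi, hpoint, setIntegral_indicator hS, inter_eq_right.2 hSbox]

theorem norm_setIntegral_fourierPhase_le {n : ℕ} {S : Set (Fin (n + 1) → ℝ)}
    (hS : MeasurableSet S) (hSbox : S ⊆ unitBox (n + 1)) {m : Fin (n + 1) → ℤ} {j : Fin (n + 1)}
    (hmj : m j ≠ 0) {C : ℕ}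
    (hslices : ∀ θ ∈ unitBox (n + 1), ∃ J : Fin C → Set ℝ, (∀ i, (J i).OrdConnected) ∧
      {t | Function.update θ j t ∈ S} = ⋃ i, J i) :
    ‖∫ θ in S, fourierPhase m θ‖ ≤ C / (π * |(m j : ℝ)|) := by
  have hint : IntegrableOn (fourierPhase m) S :=
    ((continuous_fourierPhase m).continuousOn.integrableOn_compact (isCompact_unitBox _)).mono_set
      hSbox
  rw [← integral_indicator hS]
  refine norm_integral_le_of_norm_integral_update_le j ((integrable_indicator_iff hS).2 hint)
    (fun θ hθ => indicator_of_notMem (fun h => hθ (hSbox h)) _) fun θ hθ => ?_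
  obtain ⟨J, hJ, hslice⟩ := hslices θ hθ
  have hJsub : ∀ i, J i ⊆ Icc 0 1 := fun i t ht =>
    (update_mem_unitBox_iff hθ j t).1 (hSbox (hslice.symm.subset (mem_iUnion_of_mem i ht)))
  have hline : (fun t => S.indicator (fourierPhase m) (Function.update θ j t)) = fun t =>
      (⋃ i, J i).indicator (fun t : ℝ => cexp (-(2 * π * I * (m j : ℝ)) * t)) t *
        fourierPhase m (Function.update θ j 0) := by
    funext t
    rw [← hslice]
    by_cases ht : Function.update θ j t ∈ S
    · simp [ht, fourierPhase_update m θ j t]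
    · simp [ht]
  rw [hline, integral_mul_const,
    integral_indicator (MeasurableSet.iUnion fun i => (hJ i).measurableSet), norm_mul,
    norm_fourierPhase, mul_one]
  simpa using norm_setIntegral_exp_iUnion_le hJ hJsub (Int.cast_ne_zero.2 hmj)

theorem exists_ne_zero_sup_natAbs_eq {ι : Type*} [Fintype ι] {m : ι → ℤ} (hm : m ≠ 0) :
    ∃ j, m j ≠ 0 ∧ Finset.univ.sup (fun k => (m k).natAbs) = (m j).natAbs := by
  obtain ⟨k, hk⟩ := Function.ne_iff.1 hm
  obtain ⟨j, -, hj⟩ := Finset.exists_mem_eq_sup Finset.univ ⟨k, Finset.mem_univ k⟩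
    fun j => (m j).natAbs
  have hle : (m k).natAbs ≤ (m j).natAbs :=
    hj ▸ Finset.le_sup (f := fun j => (m j).natAbs) (Finset.mem_univ k)
  exact ⟨j, Int.natAbs_pos.1 ((Int.natAbs_pos.2 hk).trans_le hle), hj⟩

theorem stmt2_general (q : ℕ) (T : (Fin q → ℝ) → ℝ) (hmeas : Measurable T)
    (α β : ℝ) (C : ℕ)
    -- on each axis-parallel line in the unit box, the preimage of (α,β) is a
    -- union of at most C intervals
    (hlines : ∀ (j : Fin q) (θ : Fin q → ℝ), θ ∈ unitBox q →
      ∃ I : Fin C → Set ℝ, (∀ i, (I i).OrdConnected) ∧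
        {t : ℝ | t ∈ Set.Icc (0:ℝ) 1 ∧ T (Function.update θ j t) ∈ Set.Ioo α β} = ⋃ i, I i)
    (ψ₀ : (Fin q → ℝ) → ℝ)
    (hψ₀ : ψ₀ = Set.indicator (unitBox q ∩ {θ | T θ ∈ Set.Ioo α β}) (fun _ => (1:ℝ)))
    (m : Fin q → ℤ) (hm : m ≠ 0) :
    ‖fourierCoeffPi q ψ₀ m‖ ≤
        (C : ℝ) / (Real.pi * ((Finset.univ.sup fun j => (m j).natAbs : ℕ) : ℝ)) ∧
      ‖fourierCoeffPi q ψ₀ m‖ ≤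
        (volume (unitBox q ∩ {θ | T θ ∈ Set.Ioo α β})).toReal := by
  set S := unitBox q ∩ {θ | T θ ∈ Set.Ioo α β}
  have hS : MeasurableSet S := (measurableSet_unitBox q).inter (hmeas measurableSet_Ioo)
  rw [hψ₀, fourierCoeffPi_indicator_one hS inter_subset_left]
  refine ⟨?_, ?_⟩
  · obtain ⟨j, hmj, hj⟩ := exists_ne_zero_sup_natAbs_eq hm
    obtain ⟨n, rfl⟩ := Nat.exists_eq_succ_of_ne_zero (Fin.pos j).ne'
    rw [hj, Nat.cast_natAbs, Int.cast_abs]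
    refine norm_setIntegral_fourierPhase_le hS inter_subset_left hmj fun θ hθ => ?_
    obtain ⟨J, hJ, hslice⟩ := hlines j θ hθ
    refine ⟨J, hJ, hslice ▸ ?_⟩
    ext t
    simp [S, update_mem_unitBox_iff hθ]
  · simpa [measureReal_def] using norm_setIntegral_le_of_norm_le_const
      ((measure_mono inter_subset_left).trans_lt (isCompact_unitBox q).measure_lt_top)
      fun θ _ => (norm_fourierPhase m θ).le

/-- Fourier coefficient bounds for the sharp cutoff `ψ₀` in the construction of the
multivariate Vinogradov function. -/
theorem stmt2 (q : ℕ) (hq : 1 ≤ q) (T : (Fin q → ℝ) → ℝ) (hmeas : Measurable T)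
    (hper : ∀ (θ : Fin q → ℝ) (j : Fin q), T (θ + Pi.single j 1) = T θ)
    (α β : ℝ) (hαβ : α < β) (C : ℕ) (hC : 0 < C)
    -- on each axis-parallel line in the unit box, the preimage of (α,β) is a
    -- union of at most C intervals
    (hlines : ∀ (j : Fin q) (θ : Fin q → ℝ), θ ∈ unitBox q →
      ∃ I : Fin C → Set ℝ, (∀ i, (I i).OrdConnected) ∧
        {t : ℝ | t ∈ Set.Icc (0:ℝ) 1 ∧ T (Function.update θ j t) ∈ Set.Ioo α β} = ⋃ i, I i)
    (ψ₀ : (Fin q → ℝ) → ℝ)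
    (hψ₀ : ψ₀ = Set.indicator (unitBox q ∩ {θ | T θ ∈ Set.Ioo α β}) (fun _ => (1:ℝ)))
    (m : Fin q → ℤ) (hm : m ≠ 0) :
    ‖fourierCoeffPi q ψ₀ m‖ ≤
        (C : ℝ) / (Real.pi * ((Finset.univ.sup fun j => (m j).natAbs : ℕ) : ℝ)) ∧
      ‖fourierCoeffPi q ψ₀ m‖ ≤
        (volume (unitBox q ∩ {θ | T θ ∈ Set.Ioo α β})).toReal :=
  stmt2_general q T hmeas α β C hlines ψ₀ hψ₀ m hm
end

section
/- Let q ≥ 1 be an integer and let T : ℝ^q → ℝ be K-Lipschitz with respect to the Euclidean norm for some K > 0. Let δ > 0 and set Δ' = K √q δ. Let α'' ≤ α' ≤ β' ≤ β'' be reals, and let ψ : ℝ^q → ℝ be measurable with 0 ≤ ψ ≤ 1 everywhere, ψ(θ) = 1 whenever T(θ) ∈ (α', β'), and ψ(θ) = 0 whenever T(θ) ∉ [α'', β'']. Define φ(θ) = (2δ)^{−q} ∫_{[−δ,δ]^q} ψ(θ + z) dz. Then 0 ≤ φ ≤ 1 everywhere, φ(θ) = 1 whenever T(θ) ∈ (α'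 + Δ', β' − Δ'), and φ(θ) = 0 whenever T(θ) ∉ [α'' − Δ', β'' + Δ']. -/
open MeasureTheory Real
open scoped ENNReal

/-!
A point `θ + z` of the averaging box `θ + [-δ, δ]^q` lies within Euclidean distance `√q δ` of `θ`,
so `T` moves by at most `Δ' = K √q δ` on it. Hence if `T θ` lies `Δ'`-deep inside `(α', β')`, then
`ψ = 1` on the whole box and its average `φ θ` is `1`; if `T θ` lies `Δ'`-far outside `[α'', β'']`,
then `ψ = 0` on the box and `φ θ = 0`. The bounds `0 ≤ φ ≤ 1` hold because an average lies between
the extreme values of the function.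
-/

namespace MeasureTheory

variable {α : Type*} [MeasurableSpace α] {μ : Measure α} {s : Set α} {f : α → ℝ} {a b : ℝ}

theorem setAverage_mem_Icc (hμ : μ s ≠ 0) (hμ₁ : μ s ≠ ∞) (hf : IntegrableOn f s μ)
    (h : ∀ x ∈ s, f x ∈ Set.Icc a b) : ⨍ x in s, f x ∂μ ∈ Set.Icc a b := by
  obtain ⟨x, hxs, hx⟩ := exists_le_setAverage hμ hμ₁ hf
  obtain ⟨y, hys, hy⟩ := exists_setAverage_le hμ hμ₁ hf
  exact ⟨(h x hxs).1.trans hx, hy.trans (h y hys).2⟩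

theorem setAverage_eq_of_forall_eq (hs : MeasurableSet s) (hμ : μ s ≠ 0) (hμ₁ : μ s ≠ ∞)
    (h : ∀ x ∈ s, f x = a) : ⨍ x in s, f x ∂μ = a := by
  rw [setAverage_congr_fun hs (Filter.Eventually.of_forall h), setAverage_const hμ hμ₁]

end MeasureTheory

section Box

variable {ι : Type*} [Fintype ι] {δ : ℝ}

theorem volume_pi_Icc_neg_self (hδ : 0 ≤ δ) :
    volume (Set.univ.pi fun _ : ι => Set.Icc (-δ) δ) =
      ENNReal.ofReal ((2 * δ) ^ Fintype.card ι) := by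
  rw [volume_pi_pi, Real.volume_Icc, Finset.prod_const, Finset.card_univ,
    ← ENNReal.ofReal_pow (by linarith)]
  ring_nf

theorem setAverage_pi_Icc_neg_self (hδ : 0 ≤ δ) (f : (ι → ℝ) → ℝ) :
    ⨍ z in Set.univ.pi (fun _ : ι => Set.Icc (-δ) δ), f z =
      ((2 * δ) ^ Fintype.card ι)⁻¹ * ∫ z in Set.univ.pi (fun _ : ι => Set.Icc (-δ) δ), f z := by
  rw [setAverage_eq, measureReal_def, volume_pi_Icc_neg_self hδ,
    ENNReal.toReal_ofReal (by positivity), smul_eq_mul]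

theorem sqrt_sum_sq_le_of_mem_pi_Icc (hδ : 0 ≤ δ) {z : ι → ℝ}
    (hz : z ∈ Set.univ.pi fun _ : ι => Set.Icc (-δ) δ) :
    √(∑ j, z j ^ 2) ≤ √(Fintype.card ι) * δ := by
  have hsum : ∑ j, z j ^ 2 ≤ (√(Fintype.card ι) * δ) ^ 2 := by
    calc ∑ j, z j ^ 2 ≤ ∑ _j : ι, δ ^ 2 :=
          Finset.sum_le_sum fun j _ => sq_le_sq' (hz j trivial).1 (hz j trivial).2
      _ = (√(Fintype.card ι) * δ) ^ 2 := by
          rw [mul_pow, sq_sqrt (Nat.cast_nonneg _), Finset.sum_const, Finset.card_univ,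
            nsmul_eq_mul]
  simpa [sqrt_sq (by positivity : 0 ≤ √(Fintype.card ι) * δ)] using sqrt_le_sqrt hsum

end Box

theorem stmt3_general (q : ℕ) (T : (Fin q → ℝ) → ℝ)
    (K : ℝ) (hK : 0 < K)
    -- T is K-Lipschitz for the Euclidean norm
    (hLip : ∀ x y : Fin q → ℝ, |T x - T y| ≤ K * Real.sqrt (∑ j, (x j - y j)^2))
    (δ : ℝ) (hδ : 0 < δ) (Δ' : ℝ) (hΔ' : Δ' = K * Real.sqrt q * δ)
    (α'' α' β' β'' : ℝ)
    (ψ : (Fin q → ℝ) → ℝ) (hmeas : Measurable ψ)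
    (hψ01 : ∀ θ, 0 ≤ ψ θ ∧ ψ θ ≤ 1)
    (hψ1 : ∀ θ, T θ ∈ Set.Ioo α' β' → ψ θ = 1)
    (hψ0 : ∀ θ, T θ ∉ Set.Icc α'' β'' → ψ θ = 0)
    (φ : (Fin q → ℝ) → ℝ)
    (hφ : ∀ θ, φ θ = ((2*δ)^q)⁻¹ *
      ∫ z in Set.univ.pi fun _ : Fin q => Set.Icc (-δ) δ, ψ (θ + z)) :
    (∀ θ, 0 ≤ φ θ ∧ φ θ ≤ 1) ∧
    (∀ θ, T θ ∈ Set.Ioo (α' + Δ') (β' - Δ') → φ θ = 1) ∧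
    (∀ θ, T θ ∉ Set.Icc (α'' - Δ') (β'' + Δ') → φ θ = 0) := by
  set S := Set.univ.pi fun _ : Fin q => Set.Icc (-δ) δ
  have hS : MeasurableSet S := MeasurableSet.univ_pi fun _ => measurableSet_Icc
  have hS₀ : volume S ≠ 0 := by
    rw [volume_pi_Icc_neg_self hδ.le]; simp [hδ]
  have hS₁ : volume S ≠ ∞ := by rw [volume_pi_Icc_neg_self hδ.le]; exact ENNReal.ofReal_ne_top
  have hφ_avg θ : φ θ = ⨍ z in S, ψ (θ + z) := by
    rw [hφ, setAverage_pi_Icc_neg_self hδ.le, Fintype.card_fin]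
  have hT_near θ : ∀ z ∈ S, |T (θ + z) - T θ| ≤ Δ' := fun z hz => by
    calc |T (θ + z) - T θ| ≤ K * √(∑ j, z j ^ 2) := by simpa using hLip (θ + z) θ
      _ ≤ Δ' := by
        rw [hΔ', mul_assoc]
        gcongr
        simpa using sqrt_sum_sq_le_of_mem_pi_Icc hδ.le hz
  refine ⟨fun θ => ?_, fun θ hθ => ?_, fun θ hθ => ?_⟩
  · rw [hφ_avg]
    refine setAverage_mem_Icc hS₀ hS₁ ?_ fun z _ => hψ01 (θ + z)
    refine Measure.integrableOn_of_bounded (M := 1) hS₁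
      (hmeas.comp (measurable_const_add θ)).aestronglyMeasurable (ae_of_all _ fun z => ?_)
    simpa [abs_le] using ⟨(hψ01 (θ + z)).1.trans' (by norm_num), (hψ01 (θ + z)).2⟩
  · refine (hφ_avg θ).trans (setAverage_eq_of_forall_eq hS hS₀ hS₁ fun z hz => hψ1 _ ?_)
    have := abs_le.1 (hT_near θ z hz)
    exact ⟨by linarith [hθ.1], by linarith [hθ.2]⟩
  · refine (hφ_avg θ).trans (setAverage_eq_of_forall_eq hS hS₀ hS₁ fun z hz => hψ0 _ ?_)
    have := abs_le.1 (hT_near θ z hz)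
    exact fun hz' => hθ ⟨by linarith [hz'.1], by linarith [hz'.2]⟩

/-- The inductive averaging step in the construction of the multivariate Vinogradov
function: averaging over a small box shrinks the plateau where the function equals 1
and enlarges the region where it vanishes, each by at most `Δ' = K √q δ` in the
values of `T`. -/
theorem stmt3 (q : ℕ) (hq : 1 ≤ q) (T : (Fin q → ℝ) → ℝ)
    (K : ℝ) (hK : 0 < K)
    -- T is K-Lipschitz for the Euclidean norm
    (hLip : ∀ x y : Fin q → ℝ, |T x - T y| ≤ K * Real.sqrt (∑ j, (x j - y j)^2))
    (δ : ℝ) (hδ : 0 < δ) (Δ' : ℝ) (hΔ' : Δ' = K * Real.sqrt q * δ)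
    (α'' α' β' β'' : ℝ) (h1 : α'' ≤ α') (h2 : α' ≤ β') (h3 : β' ≤ β'')
    (ψ : (Fin q → ℝ) → ℝ) (hmeas : Measurable ψ)
    (hψ01 : ∀ θ, 0 ≤ ψ θ ∧ ψ θ ≤ 1)
    (hψ1 : ∀ θ, T θ ∈ Set.Ioo α' β' → ψ θ = 1)
    (hψ0 : ∀ θ, T θ ∉ Set.Icc α'' β'' → ψ θ = 0)
    (φ : (Fin q → ℝ) → ℝ)
    (hφ : ∀ θ, φ θ = ((2*δ)^q)⁻¹ *
      ∫ z in Set.univ.pi fun _ : Fin q => Set.Icc (-δ) δ, ψ (θ + z)) :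
    (∀ θ, 0 ≤ φ θ ∧ φ θ ≤ 1) ∧
    (∀ θ, T θ ∈ Set.Ioo (α' + Δ') (β' - Δ') → φ θ = 1) ∧
    (∀ θ, T θ ∉ Set.Icc (α'' - Δ') (β'' + Δ') → φ θ = 0) :=
  stmt3_general q T K hK hLip δ hδ Δ' hΔ' α'' α' β' β'' ψ hmeas hψ01 hψ1 hψ0 φ hφ
end

section
/- Let g ≥ 1 be an integer, let a_1, …, a_g be integers with N := max_l |a_l| ≥ 1, let r_1, …, r_g be real numbers, and define f : ℝ → ℝ by f(ϑ) = Σ_{l=1}^g 2 cos(2π a_l ϑ + r_l). Let γ ∈ ℝ and suppose f is not identically equal to γ on [0,1]. Then the set {ϑ ∈ [0,1] : f(ϑ) = γ} has at most 4N elements. -/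
/-!
With `z = exp (iθ)`, each term `2 cos (a θ + r)` equals `e^{ir} z^a + e^{-ir} z^{-a}`, so
`z^N (f - γ)` is the value at `z` of a complex polynomial of degree at most `2N`, which is nonzero
because `f ≠ γ` somewhere. Hence `exp (2πiϑ)` takes at most `2N` values on the level set, and
`ϑ ↦ exp (2πiϑ)` is at most two-to-one on `[0,1]`.
-/

open Real Complex Polynomial

noncomputable def trigLevelPoly {ι : Type*} [Fintype ι] (N : ℕ) (a : ι → ℤ) (r : ι → ℝ) (γ : ℝ) :
    ℂ[X] :=
  ∑ l, (C (cexp (r l * I)) * X ^ (N + a l).toNat + C (cexp (-r l * I)) * X ^ (N - a l).toNat)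
    - C (γ : ℂ) * X ^ N

lemma exp_mul_pow_toNat_add_exp_mul_pow_toNat {N : ℕ} {b : ℤ} (hb : b.natAbs ≤ N) (c θ : ℝ) :
    cexp (c * I) * cexp (θ * I) ^ (N + b).toNat + cexp (-c * I) * cexp (θ * I) ^ (N - b).toNat
      = cexp (θ * I) ^ N * (2 * Real.cos (b * θ + c) : ℝ) := by
  have hpow : ∀ m : ℤ, 0 ≤ m → cexp (θ * I) ^ m.toNat = cexp (m * (θ * I)) := fun m hm => by
    rw [exp_int_mul, ← zpow_natCast, Int.toNat_of_nonneg hm]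
  rw [hpow _ (by omega), hpow _ (by omega), ← Complex.exp_nat_mul, ofReal_mul, ofReal_ofNat,
    ofReal_cos, two_cos, mul_add, ← Complex.exp_add, ← Complex.exp_add, ← Complex.exp_add,
    ← Complex.exp_add]
  congr 2 <;> push_cast <;> ring

lemma eval_exp_trigLevelPoly {ι : Type*} [Fintype ι] {N : ℕ} {a : ι → ℤ}
    (ha : ∀ l, (a l).natAbs ≤ N) (r : ι → ℝ) (γ θ : ℝ) :
    (trigLevelPoly N a r γ).eval (cexp (θ * I))
      = cexp (θ * I) ^ N * ((∑ l, 2 * Real.cos (a l * θ + r l) - γ : ℝ) : ℂ) := by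
  simp only [trigLevelPoly, eval_sub, eval_finsetSum, eval_add, eval_mul, eval_C, eval_pow, eval_X,
    exp_mul_pow_toNat_add_exp_mul_pow_toNat (ha _)]
  rw [← Finset.mul_sum]
  push_cast
  ring

lemma natDegree_trigLevelPoly_le {ι : Type*} [Fintype ι] {N : ℕ} {a : ι → ℤ}
    (ha : ∀ l, (a l).natAbs ≤ N) (r : ι → ℝ) (γ : ℝ) :
    (trigLevelPoly N a r γ).natDegree ≤ 2 * N := by
  have hmonomial : ∀ (c : ℂ) (m : ℕ), m ≤ 2 * N → (C c * X ^ m).natDegree ≤ 2 * N :=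
    fun c m hm => natDegree_C_mul_X_pow_le c m |>.trans hm
  refine (natDegree_sub_le _ _).trans (max_le ?_ (hmonomial _ _ (by omega)))
  refine natDegree_sum_le_of_forall_le _ _ fun l _ => ?_
  have := ha l
  exact (natDegree_add_le _ _).trans (max_le (hmonomial _ _ (by omega)) (hmonomial _ _ (by omega)))

lemma eq_arg_div_or_eq_arg_div_add_one {ϑ : ℝ} (hϑ : ϑ ∈ Set.Icc (0 : ℝ) 1) :
    ϑ = arg (cexp ((2 * π * ϑ : ℝ) * I)) / (2 * π)
      ∨ ϑ = arg (cexp ((2 * π * ϑ : ℝ) * I)) / (2 * π) + 1 := by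
  rw [arg_exp_mul_I]
  set k := toIocDiv two_pi_pos (-π) (2 * π * ϑ)
  have hmod := toIocMod_mem_Ioc two_pi_pos (-π) (2 * π * ϑ)
  have hsum := toIocMod_add_toIocDiv_zsmul two_pi_pos (-π) (2 * π * ϑ)
  set m := toIocMod two_pi_pos (-π) (2 * π * ϑ)
  rw [zsmul_eq_mul] at hsum
  have hϑ' : ϑ = m / (2 * π) + k := by field_simp; linarith
  obtain ⟨hm₁, hm₂⟩ := hmod
  have hk₁ : (-1 : ℝ) < k := by nlinarith [pi_pos, hϑ.1]
  have hk₂ : (k : ℝ) < 2 := by nlinarith [pi_pos, hϑ.2]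
  have : k = 0 ∨ k = 1 := by
    have : (-1 : ℤ) < k := by exact_mod_cast hk₁
    have : k < 2 := by exact_mod_cast hk₂
    omega
  rcases this with h | h
  · left; simpa [h] using hϑ'
  · right; simpa [h] using hϑ'

lemma exists_finset_card_le_of_exp_mem (T : Finset ℂ) :
    ∃ s : Finset ℝ, {ϑ : ℝ | ϑ ∈ Set.Icc (0 : ℝ) 1 ∧ cexp ((2 * π * ϑ : ℝ) * I) ∈ T} ⊆ ↑s
      ∧ s.card ≤ 2 * T.card := by
  classical
  let w : ℂ → ℝ := fun z => arg z / (2 * π)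
  refine ⟨T.image w ∪ T.image (w · + 1), ?_, ?_⟩
  · rintro ϑ ⟨hϑ, hT⟩
    rcases eq_arg_div_or_eq_arg_div_add_one hϑ with h | h
    · exact Finset.mem_union_left _ (Finset.mem_image.mpr ⟨_, hT, h.symm⟩)
    · exact Finset.mem_union_right _ (Finset.mem_image.mpr ⟨_, hT, h.symm⟩)
  · calc (T.image w ∪ T.image (w · + 1)).card
        ≤ (T.image w).card + (T.image (w · + 1)).card := Finset.card_union_le _ _
      _ ≤ T.card + T.card := add_le_add Finset.card_image_le Finset.card_image_le
      _ = 2 * T.card := (two_mul _).symm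

theorem stmt4_general (g : ℕ) (a : Fin g → ℤ) (r : Fin g → ℝ)
    (N : ℕ) (hN : N = Finset.univ.sup fun l => (a l).natAbs)
    (f : ℝ → ℝ)
    (hf : ∀ ϑ : ℝ, f ϑ = ∑ l, 2 * Real.cos (2 * Real.pi * (a l : ℝ) * ϑ + r l))
    (γ : ℝ) (hnc : ∃ ϑ ∈ Set.Icc (0:ℝ) 1, f ϑ ≠ γ) :
    ∃ s : Finset ℝ, {ϑ : ℝ | ϑ ∈ Set.Icc (0:ℝ) 1 ∧ f ϑ = γ} ⊆ ↑s ∧ s.card ≤ 4 * N := by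
  have ha : ∀ l, (a l).natAbs ≤ N := fun l =>
    hN ▸ Finset.le_sup (f := fun l => (a l).natAbs) (Finset.mem_univ l)
  set P := trigLevelPoly N a r γ
  have hP : ∀ ϑ : ℝ, P.eval (cexp ((2 * π * ϑ : ℝ) * I))
      = cexp ((2 * π * ϑ : ℝ) * I) ^ N * ((f ϑ - γ : ℝ) : ℂ) := fun ϑ => by
    rw [eval_exp_trigLevelPoly ha, hf]
    congr 4 with l
    ring_nf
  have hP0 : P ≠ 0 := by
    obtain ⟨ϑ, -, hϑ⟩ := hnc
    intro h0
    simpa [h0, sub_eq_zero, hϑ] using hP ϑ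
  obtain ⟨s, hsub, hcard⟩ := exists_finset_card_le_of_exp_mem P.roots.toFinset
  refine ⟨s, fun ϑ ⟨hϑ, hfϑ⟩ => hsub ⟨hϑ, ?_⟩, ?_⟩
  · rw [Multiset.mem_toFinset, mem_roots hP0, IsRoot, hP, hfϑ, sub_self, ofReal_zero, mul_zero]
  · calc s.card ≤ 2 * P.roots.toFinset.card := hcard
      _ ≤ 2 * P.natDegree := by gcongr; exact (Multiset.toFinset_card_le _).trans (card_roots' P)
      _ ≤ 4 * N := by linarith [natDegree_trigLevelPoly_le ha r γ]

/-- A non-degenerate level set of a real trigonometric polynomial of degree at most `N`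
meets `[0,1]` in at most `4N` points (key step of Lemma 3.8 of the paper). -/
theorem stmt4 (g : ℕ) (hg : 1 ≤ g) (a : Fin g → ℤ) (r : Fin g → ℝ)
    (N : ℕ) (hN : N = Finset.univ.sup fun l => (a l).natAbs) (hN1 : 1 ≤ N)
    (f : ℝ → ℝ)
    (hf : ∀ ϑ : ℝ, f ϑ = ∑ l, 2 * Real.cos (2 * Real.pi * (a l : ℝ) * ϑ + r l))
    (γ : ℝ) (hnc : ∃ ϑ ∈ Set.Icc (0:ℝ) 1, f ϑ ≠ γ) :
    ∃ s : Finset ℝ, {ϑ : ℝ | ϑ ∈ Set.Icc (0:ℝ) 1 ∧ f ϑ = γ} ⊆ ↑s ∧ s.card ≤ 4 * N :=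
  stmt4_general g a r N hN f hf γ hnc
end

section
/- Let a be a real number with 0 < a < 1 and let y > 0 be real. Then (1/(2π)) ∫_{−∞}^{∞} y^{2+it} / (2 + a + it)^2 dt equals 0 if 0 < y < 1, and equals y^{−a} · log(y) if y ≥ 1. (Here y^{2+it} denotes the complex power exp((2+it)·log y), and the integral is absolutely convergent.) -/
/-!
With `c = 2 + a` and `x = log y` the integrand is `y² e^{itx} / (c + it)²`. The function equal to
`u e^{-cu}` for `u > 0` and to `0` for `u ≤ 0` is continuous and integrable, and its Fourier
transform `1 / (c + 2πiξ)²` is integrable, so Fourier inversion at `x` evaluates the integral as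
`2π y²` times that function at `log y`: this is `0` when `y < 1` and `2π y^{-a} log y` when
`y ≥ 1`.
-/

open MeasureTheory Real Complex Set Filter Topology
open scoped FourierTransform

section LaplaceTransform

variable {z : ℂ}

lemma norm_ofReal_pow_mul_cexp_neg_mul (z : ℂ) (n : ℕ) (u : ℝ) :
    ‖(u : ℂ) ^ n * cexp (-(z * u))‖ = |u| ^ n * Real.exp (-(z.re * u)) := by
  simp [Complex.norm_exp, Complex.mul_re]

lemma integrableOn_Ioi_ofReal_mul_cexp_neg_mul (hz : 0 < z.re) :
    IntegrableOn (fun u : ℝ => (u : ℂ) * cexp (-(z * u))) (Ioi 0) := by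
  refine Integrable.mono'
    (integrableOn_rpow_mul_exp_neg_mul_rpow (s := 1) (p := 1) (by norm_num) one_pos hz)
    (by fun_prop) ?_
  filter_upwards [ae_restrict_mem measurableSet_Ioi] with u hu
  simpa [abs_of_pos (mem_Ioi.1 hu)] using (norm_ofReal_pow_mul_cexp_neg_mul z 1 u).le

lemma tendsto_ofReal_pow_mul_cexp_neg_mul_atTop (hz : 0 < z.re) (n : ℕ) :
    Tendsto (fun u : ℝ => (u : ℂ) ^ n * cexp (-(z * u))) atTop (𝓝 0) := by
  rw [tendsto_zero_iff_norm_tendsto_zero]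
  refine (tendsto_rpow_mul_exp_neg_mul_atTop_nhds_zero n z.re hz).congr' ?_
  filter_upwards [eventually_ge_atTop 0] with u hu
  rw [norm_ofReal_pow_mul_cexp_neg_mul, abs_of_nonneg hu, rpow_natCast, neg_mul]

lemma integral_Ioi_ofReal_mul_cexp_neg_mul (hz : 0 < z.re) :
    ∫ u : ℝ in Ioi 0, (u : ℂ) * cexp (-(z * u)) = 1 / z ^ 2 := by
  have hz0 : z ≠ 0 := fun h => by simp [h] at hz
  have hderiv : ∀ u ∈ Ici (0 : ℝ),
      HasDerivAt (fun u : ℝ => -((u / z + 1 / z ^ 2) * cexp (-(z * u))))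
        ((u : ℂ) * cexp (-(z * u))) u := fun u _ =>
    (((((hasDerivAt_id (u : ℂ)).div_const z).add_const (1 / z ^ 2)).mul
      ((hasDerivAt_id (u : ℂ)).const_mul z).neg.cexp).neg.congr_deriv
        (by simp only [Pi.neg_apply, id]; field_simp; ring)).comp_ofReal
  have hlim : Tendsto (fun u : ℝ => -((u / z + 1 / z ^ 2) * cexp (-(z * u)))) atTop (𝓝 0) := by
    have := (((tendsto_ofReal_pow_mul_cexp_neg_mul_atTop hz 1).div_const z).add
      ((tendsto_ofReal_pow_mul_cexp_neg_mul_atTop hz 0).const_mul (1 / z ^ 2))).neg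
    simp only [pow_one, pow_zero, one_mul, zero_div, mul_zero, add_zero, neg_zero] at this
    exact this.congr fun u => by ring
  rw [integral_Ioi_of_hasDerivAt_of_tendsto' hderiv
    (integrableOn_Ioi_ofReal_mul_cexp_neg_mul hz) hlim]
  simp

end LaplaceTransform

noncomputable def mulExpNegIoi (c : ℝ) : ℝ → ℂ :=
  (Ioi 0).indicator fun u => u * cexp (-(c * u))

section MulExpNegIoi

variable {c : ℝ}

lemma mulExpNegIoi_of_nonpos {u : ℝ} (hu : u ≤ 0) : mulExpNegIoi c u = 0 :=
  indicator_of_notMem (not_lt.2 hu) _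

lemma mulExpNegIoi_of_nonneg {u : ℝ} (hu : 0 ≤ u) : mulExpNegIoi c u = u * cexp (-(c * u)) := by
  rcases hu.eq_or_lt with rfl | hu
  · simp [mulExpNegIoi_of_nonpos le_rfl]
  · exact indicator_of_mem hu _

lemma continuous_mulExpNegIoi (c : ℝ) : Continuous (mulExpNegIoi c) :=
  Continuous.indicator (by simp) (by fun_prop)

lemma integrable_mulExpNegIoi (hc : 0 < c) : Integrable (mulExpNegIoi c) :=
  (integrable_indicator_iff measurableSet_Ioi).2
    (integrableOn_Ioi_ofReal_mul_cexp_neg_mul (by simpa using hc))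

lemma fourier_mulExpNegIoi (hc : 0 < c) (ξ : ℝ) :
    𝓕 (mulExpNegIoi c) ξ = 1 / (c + (2 * π * ξ : ℝ) * I) ^ 2 := by
  rw [Real.fourier_real_eq_integral_exp_smul]
  simp_rw [mulExpNegIoi,
    ← indicator_smul_apply (Ioi 0) fun v : ℝ => cexp (↑(-2 * π * v * ξ) * I)]
  rw [integral_indicator measurableSet_Ioi,
    ← integral_Ioi_ofReal_mul_cexp_neg_mul (by simpa using hc)]
  refine setIntegral_congr_fun measurableSet_Ioi fun u _ => ?_
  rw [smul_eq_mul, mul_left_comm, ← Complex.exp_add]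
  push_cast
  ring_nf

end MulExpNegIoi

section Inversion

variable {c : ℝ}

lemma norm_one_div_ofReal_add_mul_I_sq (c t : ℝ) :
    ‖1 / ((c : ℂ) + t * I) ^ 2‖ = 1 / (c ^ 2 + t ^ 2) := by
  rw [norm_div, norm_one, norm_pow, Complex.sq_norm, Complex.normSq_add_mul_I]

lemma integrable_one_div_ofReal_add_mul_I_sq (hc : c ≠ 0) :
    Integrable fun t : ℝ => 1 / ((c : ℂ) + t * I) ^ 2 := by
  refine Integrable.mono' ((integrable_inv_one_add_sq.comp_div hc).const_mul (c ^ 2)⁻¹)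
    (by fun_prop : Measurable _).aestronglyMeasurable
    (Eventually.of_forall fun t => ?_)
  rw [norm_one_div_ofReal_add_mul_I_sq]
  field_simp
  rfl

lemma integrable_cexp_mul_I_div_ofReal_add_mul_I_sq (hc : c ≠ 0) (x : ℝ) :
    Integrable fun t : ℝ => cexp (↑(t * x) * I) / (c + t * I) ^ 2 := by
  refine (integrable_one_div_ofReal_add_mul_I_sq hc).mono
    (by fun_prop : Measurable _).aestronglyMeasurable (Eventually.of_forall fun t => ?_)
  rw [norm_div, norm_div, norm_exp_ofReal_mul_I, norm_one]

theorem integral_cexp_mul_I_div_ofReal_add_mul_I_sq (hc : 0 < c) (x : ℝ) :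
    ∫ t : ℝ, cexp (↑(t * x) * I) / (c + t * I) ^ 2 = 2 * π * mulExpNegIoi c x := by
  have hinv := (integrable_mulExpNegIoi hc).fourierInv_fourier_eq
    ((funext (fourier_mulExpNegIoi hc)).symm ▸
      (integrable_one_div_ofReal_add_mul_I_sq hc.ne').comp_mul_left' two_pi_pos.ne')
    (continuous_mulExpNegIoi c).continuousAt (v := x)
  rw [fourierInv_eq'] at hinv
  simp only [fourier_mulExpNegIoi hc, smul_eq_mul, Real.inner_apply, mul_one_div, ← mul_assoc]
    at hinv
  rw [Measure.integral_comp_mul_left (fun t : ℝ => cexp (↑(t * x) * I) / (c + t * I) ^ 2),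
    abs_of_pos (inv_pos.2 two_pi_pos), Complex.real_smul] at hinv
  rw [← hinv, ← mul_assoc, ← ofReal_ofNat, ← ofReal_mul, ← ofReal_mul,
    mul_inv_cancel₀ two_pi_pos.ne', ofReal_one, one_mul]

end Inversion

theorem stmt12_general (a : ℝ) (ha : 0 < a) (y : ℝ) (hy : 0 < y) :
    Integrable (fun t : ℝ =>
      Complex.exp ((2 + (t : ℂ) * Complex.I) * (Real.log y : ℂ)) /
        ((2 + (a : ℂ) + (t : ℂ) * Complex.I) ^ 2)) ∧
    ((1 / (2 * Real.pi) : ℝ) : ℂ) *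
        (∫ t : ℝ, Complex.exp ((2 + (t : ℂ) * Complex.I) * (Real.log y : ℂ)) /
          ((2 + (a : ℂ) + (t : ℂ) * Complex.I) ^ 2)) =
      if y < 1 then 0 else ((y ^ (-a) * Real.log y : ℝ) : ℂ) := by
  have hc : 0 < 2 + a := by linarith
  have hsplit : (fun t : ℝ => cexp ((2 + t * I) * (Real.log y : ℂ)) / (2 + a + t * I) ^ 2) =
      fun t : ℝ => cexp (2 * (Real.log y : ℂ)) *
        (cexp (↑(t * Real.log y) * I) / (↑(2 + a) + t * I) ^ 2) := by
    funext t
    rw [← mul_div_assoc, ← Complex.exp_add]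
    push_cast
    ring_nf
  rw [hsplit, integral_const_mul, integral_cexp_mul_I_div_ofReal_add_mul_I_sq hc]
  refine ⟨(integrable_cexp_mul_I_div_ofReal_add_mul_I_sq hc.ne' _).const_mul _, ?_⟩
  split_ifs with hy1
  · simp [mulExpNegIoi_of_nonpos (log_neg hy hy1).le]
  · rw [mulExpNegIoi_of_nonneg (log_nonneg (not_lt.1 hy1)), rpow_def_of_pos hy]
    push_cast
    field_simp
    rw [mul_assoc, ← Complex.exp_add]
    ring_nf

/-- Bach's kernel identity (equation (5.2) of the paper): for `0 < a < 1` and `y > 0`,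
`(1/(2π)) ∫_{−∞}^{∞} y^{2+it}/(2+a+it)² dt` equals `0` if `0 < y < 1` and
`y^{−a} log y` if `y ≥ 1`, the integral being absolutely convergent.  Here
`y^{2+it} = exp((2+it)·log y)`. -/
theorem stmt12 (a : ℝ) (ha : 0 < a) (ha1 : a < 1) (y : ℝ) (hy : 0 < y) :
    Integrable (fun t : ℝ =>
      Complex.exp ((2 + (t : ℂ) * Complex.I) * (Real.log y : ℂ)) /
        ((2 + (a : ℂ) + (t : ℂ) * Complex.I) ^ 2)) ∧
    ((1 / (2 * Real.pi) : ℝ) : ℂ) *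
        (∫ t : ℝ, Complex.exp ((2 + (t : ℂ) * Complex.I) * (Real.log y : ℂ)) /
          ((2 + (a : ℂ) + (t : ℂ) * Complex.I) ^ 2)) =
      if y < 1 then 0 else ((y ^ (-a) * Real.log y : ℝ) : ℂ) :=
  stmt12_general a ha y hy
end
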